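/- If ⟦φ⟧ ∩ [w]_Γ is nonempty, then Min_{⊑_w^Γ}(⟦φ⟧) = Min_{⊴_w^Γ}(⟦φ⟧), i.e., when some φ-world fully agrees with w on Γ, the maximal-superset minimal φ-worlds coincide with the strict-agreement minimal φ-worlds. -/

import Mathlib

/-! A φ-world in `[w]_Γ` agrees with `w` on all of `Γ`, so its agreement set strictly contains
that of any world outside `[w]_Γ`; it therefore lies strictly `⊑`-below every such world, and all
`⊑`-minimal φ-worlds fall in `[w]_Γ`. Inside `[w]_Γ` all agreement sets equal `Γ`, so `⊑` reduces
to `⪯_w` there, which is `⊴`. -/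

open Set

/-- Minimal elements of `S` within domain `D` w.r.t. the strict part of `r`. -/
def minOnRel {W : Type*} (r : W → W → Prop) (D S : Set W) : Set W :=
  {v | v ∈ S ∩ D ∧ ∀ u ∈ S ∩ D, ¬ (r u v ∧ ¬ r v u)}

/-- The set of formulas in `Γ` on whose truth `u` agrees with `w`. -/
def agreeSet {W F : Type*} (sat : W → F → Prop) (Γ : Set F) (w u : W) : Set F :=
  {γ ∈ Γ | (sat u γ ↔ sat w γ)}

/-- `[w]_Γ`: worlds of `Ww` agreeing with `w` on every formula of `Γ`. -/
def cpCls {W F : Type*} (sat : W → F → Prop) (Γ : Set F) (Ww : Set W) (w : W) : Set W :=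
  {u ∈ Ww | ∀ γ ∈ Γ, (sat u γ ↔ sat w γ)}

/-- `⊴_w^Γ`: the restriction of `pre` to `[w]_Γ`. -/
def cpRel {W F : Type*} (sat : W → F → Prop) (Γ : Set F) (Ww : Set W)
    (pre : W → W → Prop) (w : W) (u v : W) : Prop :=
  u ∈ cpCls sat Γ Ww w ∧ v ∈ cpCls sat Γ Ww w ∧ pre u v

/-- The restriction of a relation `pre` to a subset `A`. -/
def restrictRel {W : Type*} (A : Set W) (pre : W → W → Prop) (u v : W) : Prop :=
  u ∈ A ∧ v ∈ A ∧ pre u v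

/-- `⪯_w^Γ`: the naive-counting relation. -/
def ncRel {W F : Type*} (sat : W → F → Prop) (Γ : Finset F)
    (pre : W → W → Prop) (w : W) (u v : W) : Prop :=
  (agreeSet sat (↑Γ) w u).ncard > (agreeSet sat (↑Γ) w v).ncard ∨
    ((agreeSet sat (↑Γ) w u).ncard = (agreeSet sat (↑Γ) w v).ncard ∧ pre u v)

/-- `⊑_w^Γ`: the maximal-superset relation. -/
def msRel {W F : Type*} (sat : W → F → Prop) (Γ : Set F)
    (pre : W → W → Prop) (w : W) (u v : W) : Prop :=
  agreeSet sat Γ w v ⊂ agreeSet sat Γ w u ∨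
    (agreeSet sat Γ w v = agreeSet sat Γ w u ∧ pre u v)

theorem minOnRel_eq_of_strictly_below {W : Type*} {r r' : W → W → Prop} {D D' S : Set W}
    (hsub : D' ⊆ D) (hagree : ∀ u ∈ D', ∀ v ∈ D', r u v ↔ r' u v)
    (hclosed : ∀ u ∈ D, ∀ v ∈ D', r u v → u ∈ D')
    (hbelow : ∃ z ∈ S ∩ D', ∀ v ∈ D \ D', r z v ∧ ¬ r v z) :
    minOnRel r D S = minOnRel r' D' S := by
  obtain ⟨z, hzS, hz⟩ := hbelow
  ext v
  constructor
  · rintro ⟨⟨hvS, hvD⟩, hmin⟩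
    have hvD' : v ∈ D' := by
      by_contra hv
      exact hmin z ⟨hzS.1, hsub hzS.2⟩ (hz v ⟨hvD, hv⟩)
    refine ⟨⟨hvS, hvD'⟩, fun u ⟨huS, huD'⟩ => ?_⟩
    rw [← hagree u huD' v hvD', ← hagree v hvD' u huD']
    exact hmin u ⟨huS, hsub huD'⟩
  · rintro ⟨⟨hvS, hvD'⟩, hmin⟩
    refine ⟨⟨hvS, hsub hvD'⟩, fun u ⟨huS, huD⟩ ⟨huv, hvu⟩ => ?_⟩
    have huD' := hclosed u huD v hvD' huv
    rw [hagree u huD' v hvD', hagree v hvD' u huD'] at *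
    exact hmin u ⟨huS, huD'⟩ ⟨huv, hvu⟩

section Agreement

variable {W F : Type*} (sat : W → F → Prop) (Γ : Set F) (Ww : Set W) (pre : W → W → Prop)
  (w : W) {u v : W}

theorem agreeSet_subset : agreeSet sat Γ w u ⊆ Γ := fun _ h => h.1

theorem cpCls_subset : cpCls sat Γ Ww w ⊆ Ww := fun _ h => h.1

theorem mem_cpCls_iff : u ∈ cpCls sat Γ Ww w ↔ u ∈ Ww ∧ agreeSet sat Γ w u = Γ := by
  refine and_congr_right fun _ => ⟨fun h => ?_, fun h γ hγ => ?_⟩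
  · exact (agreeSet_subset sat Γ w).antisymm fun γ hγ => ⟨hγ, h γ hγ⟩
  · rw [← h] at hγ
    exact hγ.2

variable {sat Γ pre w}

theorem msRel_strict_of_ssubset (h : agreeSet sat Γ w v ⊂ agreeSet sat Γ w u) :
    msRel sat Γ pre w u v ∧ ¬ msRel sat Γ pre w v u := by
  refine ⟨Or.inl h, ?_⟩
  rintro (h' | ⟨h', _⟩)
  · exact h.asymm h'
  · exact h.ne h'.symm

theorem msRel_iff_of_agreeSet_eq (hu : agreeSet sat Γ w u = Γ) (hv : agreeSet sat Γ w v = Γ) :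
    msRel sat Γ pre w u v ↔ pre u v := by
  simp [msRel, hu, hv]

theorem agreeSet_eq_of_msRel (hv : agreeSet sat Γ w v = Γ) (h : msRel sat Γ pre w u v) :
    agreeSet sat Γ w u = Γ := by
  rcases h with h | ⟨h, _⟩
  · exact absurd (hv ▸ h) (agreeSet_subset sat Γ w).not_ssubset
  · exact h ▸ hv

end Agreement

theorem ms_min_eq_cp_min_general {W F : Type*} (sat : W → F → Prop) (Γ : Finset F)
    (Ww : Set W) (pre : W → W → Prop) (w : W) (P : Set W)
    (hne : (P ∩ cpCls sat (↑Γ) Ww w).Nonempty) :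
    minOnRel (msRel sat (↑Γ) pre w) Ww P =
      minOnRel (cpRel sat (↑Γ) Ww pre w) (cpCls sat (↑Γ) Ww w) P := by
  obtain ⟨z, hzP, hz⟩ := hne
  refine minOnRel_eq_of_strictly_below (cpCls_subset sat _ Ww w) ?_ ?_ ⟨z, ⟨hzP, hz⟩, ?_⟩
  · intro u hu v hv
    rw [msRel_iff_of_agreeSet_eq ((mem_cpCls_iff ..).1 hu).2 ((mem_cpCls_iff ..).1 hv).2]
    exact ⟨fun h => ⟨hu, hv, h⟩, fun h => h.2.2⟩
  · intro u hu v hv huv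
    exact (mem_cpCls_iff ..).2 ⟨hu, agreeSet_eq_of_msRel ((mem_cpCls_iff ..).1 hv).2 huv⟩
  · rintro v ⟨hv, hvc⟩
    apply msRel_strict_of_ssubset
    rw [((mem_cpCls_iff ..).1 hz).2]
    exact (agreeSet_subset ..).ssubset_of_ne fun h => hvc ((mem_cpCls_iff ..).2 ⟨hv, h⟩)

theorem ms_min_eq_cp_min {W F : Type*} (sat : W → F → Prop) (Γ : Finset F)
    (Ww : Set W) (pre : W → W → Prop) (w : W) (P : Set W)
    (hrefl : ∀ u ∈ Ww, pre u u)
    (htrans : ∀ u ∈ Ww, ∀ v ∈ Ww, ∀ x ∈ Ww, pre u v → pre v x → pre u x)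
    (htot : ∀ u ∈ Ww, ∀ v ∈ Ww, pre u v ∨ pre v u)
    (hwf : ∀ S : Set W, S ⊆ Ww → S.Nonempty →
      ∃ v ∈ S, ∀ u ∈ S, ¬ (pre u v ∧ ¬ pre v u))
    (hne : (P ∩ cpCls sat (↑Γ) Ww w).Nonempty) :
    minOnRel (msRel sat (↑Γ) pre w) Ww P =
      minOnRel (cpRel sat (↑Γ) Ww pre w) (cpCls sat (↑Γ) Ww w) P :=
  ms_min_eq_cp_min_general sat Γ Ww pre w P hne
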